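/- Let n ≥ 1 and k be integers with 2n + 1 ≤ k. Every k-peg Hanoi group generated by a set S with 1 ∈ S ⊆ R̄_{k,n} is contracting. -/

import Mathlib

/-!
Common framework: automorphisms of the rooted tree `X_k^*`, root permutations,
sections, self-similar and contracting groups, Hanoi automorphisms and Hanoi
groups, following Makisumi–Stadnyk–Steinhurst, "Modified Hanoi Towers Groups
and Limit Spaces".

A word `x_n … x_1` over the alphabet `X_k = Fin k` is encoded as the list
`[x_n, …, x_1]`, whose head `x_n` is the first letter, i.e. the letter that a
tree automorphism reads (and permutes) first.
-/

namespace Hanoi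

/-- Words over the alphabet `X_k = Fin k`. -/
abbrev Word (k : ℕ) := List (Fin k)

/-- `e` is an automorphism of the rooted tree `X_k^*`: it fixes the root
(the empty word), preserves word length (levels) and preserves the tree
structure (words sharing an initial segment of length `n` are sent to words
sharing an initial segment of length `n`). -/
def IsTreeAut {k : ℕ} (e : Equiv.Perm (Word k)) : Prop :=
  (∀ w : Word k, (e w).length = w.length) ∧
    ∀ (w v : Word k) (n : ℕ), w.take n = v.take n → (e w).take n = (e v).take n

open Classical in
/-- The root permutation `σ_e` of a tree automorphism `e` (its action on
one-letter words). -/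
noncomputable def rootPerm {k : ℕ} (e : Equiv.Perm (Word k)) : Equiv.Perm (Fin k) :=
  if h : Function.Bijective (fun x : Fin k => ((e [x]).head?.getD x)) then
    Equiv.ofBijective _ h
  else 1

open Classical in
/-- The section `e|_x` of `e` at a letter `x`: the unique automorphism with
`e (x :: w) = σ_e x :: (e|_x) w` for all words `w`. -/
noncomputable def sec {k : ℕ} (e : Equiv.Perm (Word k)) (x : Fin k) : Equiv.Perm (Word k) :=
  if h : Function.Bijective (fun w : Word k => (e (x :: w)).tail) then
    Equiv.ofBijective _ h
  else 1

/-- The section `e|_v` of `e` at a word `v = x_n … x_1`, defined by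
`e|_v = (e|_{x_n})|_{x_{n-1} … x_1}`. -/
noncomputable def secW {k : ℕ} (e : Equiv.Perm (Word k)) : Word k → Equiv.Perm (Word k)
  | [] => e
  | x :: v => secW (sec e x) v

/-- A subgroup of the permutations of `X_k^*` is self-similar if it consists of
tree automorphisms and is closed under taking sections. -/
def IsSelfSimilar {k : ℕ} (G : Subgroup (Equiv.Perm (Word k))) : Prop :=
  (∀ g ∈ G, IsTreeAut g) ∧ ∀ g ∈ G, ∀ x : Fin k, sec g x ∈ G

/-- A self-similar group `G` is contracting if there is a finite subset `N ⊆ G`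
such that for every `g ∈ G` all sections of `g` at words of length at least
some `m` lie in `N`. -/
def IsContracting {k : ℕ} (G : Subgroup (Equiv.Perm (Word k))) : Prop :=
  ∃ N : Set (Equiv.Perm (Word k)), N.Finite ∧ N ⊆ (G : Set (Equiv.Perm (Word k))) ∧
    ∀ g ∈ G, ∃ m : ℕ, ∀ v : Word k, m ≤ v.length → secW g v ∈ N

/-- `N` is the nucleus of `G`: a smallest finite subset of `G` catching all
deep enough sections of every element of `G`. -/
def IsNucleus {k : ℕ} (G : Subgroup (Equiv.Perm (Word k)))
    (N : Set (Equiv.Perm (Word k))) : Prop :=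
  (N.Finite ∧ N ⊆ (G : Set (Equiv.Perm (Word k))) ∧
    ∀ g ∈ G, ∃ m : ℕ, ∀ v : Word k, m ≤ v.length → secW g v ∈ N) ∧
  ∀ N' : Set (Equiv.Perm (Word k)), N'.Finite → N' ⊆ (G : Set (Equiv.Perm (Word k))) →
    (∀ g ∈ G, ∃ m : ℕ, ∀ v : Word k, m ≤ v.length → secW g v ∈ N') → N ⊆ N'

/-- `a` is a Hanoi automorphism with set of inactive pegs `Q`: the section at
each active peg (element of the complement of `Q`) is trivial, the section at
each inactive peg is `a` itself, and the root permutation fixes each inactive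
peg. -/
def IsHanoiWith {k : ℕ} (a : Equiv.Perm (Word k)) (Q : Set (Fin k)) : Prop :=
  IsTreeAut a ∧ (∀ i ∉ Q, sec a i = 1) ∧ (∀ j ∈ Q, sec a j = a) ∧
    ∀ j ∈ Q, rootPerm a j = j

/-- `a` is a `k`-peg Hanoi automorphism. -/
def IsHanoiAut {k : ℕ} (a : Equiv.Perm (Word k)) : Prop := ∃ Q, IsHanoiWith a Q

open Classical in
/-- The set `Q_a` of inactive pegs of a Hanoi automorphism `a`; by convention
`Q_1 = X_k` (for `a ≠ 1` the set of inactive pegs is uniquely determined). -/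
noncomputable def inactivePegs {k : ℕ} (a : Equiv.Perm (Word k)) : Set (Fin k) :=
  if a = 1 then Set.univ
  else if h : ∃ Q, IsHanoiWith a Q then h.choose else ∅

/-- `S_{k,q}`: the set of Hanoi automorphisms over `X_k` with exactly `q`
inactive pegs. -/
noncomputable def hanoiSet (k q : ℕ) : Set (Equiv.Perm (Word k)) :=
  {a | IsHanoiAut a ∧ (inactivePegs a).ncard = q}

/-- `L = [s_n, …, s_1]` is a representation of `g` over the generating set `S`:
each `s_i ∈ S ∪ S⁻¹` and `g = s_n ⋯ s_2 s_1`. -/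
def IsRepOf {k : ℕ} (S : Set (Equiv.Perm (Word k))) (L : List (Equiv.Perm (Word k)))
    (g : Equiv.Perm (Word k)) : Prop :=
  (∀ s ∈ L, s ∈ S ∨ s⁻¹ ∈ S) ∧ L.prod = g

/-- The length `l(g)` of `g` with respect to `S`: the length of a minimal
representation (`0` for the identity). -/
noncomputable def repLength {k : ℕ} (S : Set (Equiv.Perm (Word k)))
    (g : Equiv.Perm (Word k)) : ℕ :=
  sInf {n | ∃ L, IsRepOf S L g ∧ L.length = n}

/-- The essential set of a representation: the intersection of the sets of
inactive pegs of its letters. -/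
noncomputable def essSet {k : ℕ} (L : List (Equiv.Perm (Word k))) : Set (Fin k) :=
  ⋂ s ∈ L, inactivePegs s

/-- The prenucleus of `G`: the set of elements `g ∈ G` with `g|_j = g` for some
letter `j`. -/
noncomputable def preNucleus {k : ℕ} (G : Subgroup (Equiv.Perm (Word k))) :
    Set (Equiv.Perm (Word k)) :=
  {g | g ∈ G ∧ ∃ j : Fin k, sec g j = g}

/-- The underlying function of the Hanoi Towers move `a_{ij}`: it changes the
first occurrence of `i` or `j` in a word by means of the transposition `(i j)`
and leaves the rest of the word unchanged. -/
def hanoiMoveFun {k : ℕ} (i j : Fin k) : Word k → Word k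
  | [] => []
  | x :: w => if x = i ∨ x = j then Equiv.swap i j x :: w else x :: hanoiMoveFun i j w

theorem hanoiMoveFun_involutive {k : ℕ} (i j : Fin k) :
    Function.Involutive (hanoiMoveFun i j) := by
  intro w
  induction w with
  | nil => rfl
  | cons x t ih =>
    by_cases h : x = i ∨ x = j
    · have h2 : Equiv.swap i j x = i ∨ Equiv.swap i j x = j := by
        rcases h with h | h <;> subst h <;> simp
      simp only [hanoiMoveFun, if_pos h, if_pos h2, Equiv.swap_apply_self]
    · simp only [hanoiMoveFun, if_neg h, ih]

/-- The Hanoi Towers move `a_{ij}`, as a permutation of `X_k^*`: its root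
permutation is the transposition `(i j)`, its sections at `i` and `j` are
trivial and all its other sections equal `a_{ij}` itself. -/
def hanoiMove {k : ℕ} (i j : Fin k) : Equiv.Perm (Word k) :=
  (hanoiMoveFun_involutive i j).toPerm

/-- The orbit of the letter `j` under the subgroup of `Sym(X_k)` generated by
the root permutations of the elements of `T`. -/
noncomputable def orbT {k : ℕ} (T : Finset (Equiv.Perm (Word k))) (j : Fin k) : Set (Fin k) :=
  MulAction.orbit (Subgroup.closure ((fun a => rootPerm a) '' (T : Set (Equiv.Perm (Word k))))) j

/-- The set `Fix(T)` of letters fixed by the root permutation of every element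
of `T`. -/
noncomputable def fixT {k : ℕ} (T : Finset (Equiv.Perm (Word k))) : Set (Fin k) :=
  {x | ∀ s ∈ T, rootPerm s x = x}

/-- Condition (*) on a generating set `S` of Hanoi automorphisms: for every
finite `T ⊆ S` with nonempty essential set and every letter `j ∉ Fix(T)`,
the orbit of `j` misses the inactive pegs of some element of `T`. -/
noncomputable def CondStar {k : ℕ} (S : Set (Equiv.Perm (Word k))) : Prop :=
  ∀ T : Finset (Equiv.Perm (Word k)), (T : Set (Equiv.Perm (Word k))) ⊆ S →
    (⋂ s ∈ T, inactivePegs s).Nonempty →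
    ∀ j : Fin k, j ∉ fixT T →
      ∃ s ∈ T, orbT T j ∩ inactivePegs s = ∅

open Classical in
/-- `d(g)`: the least number of distinct generators occurring among all
representations of `g` having nonempty essential set. -/
noncomputable def dCount {k : ℕ} (S : Set (Equiv.Perm (Word k)))
    (g : Equiv.Perm (Word k)) : ℕ :=
  sInf {M | ∃ L, IsRepOf S L g ∧ (essSet L).Nonempty ∧ L.toFinset.card = M}

/-- `S` is fully symmetric: for every non-identity `a ∈ S` and every
`φ ∈ Sym(X_k)`, the Hanoi automorphism `φ·a` with inactive pegs `φ(Q_a)` and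
root permutation `φ ∘ σ_a ∘ φ⁻¹` again lies in `S`. -/
noncomputable def FullySymmetric {k : ℕ} (S : Set (Equiv.Perm (Word k))) : Prop :=
  ∀ a ∈ S, a ≠ 1 → ∀ φ : Equiv.Perm (Fin k), ∀ b : Equiv.Perm (Word k),
    IsHanoiWith b (φ '' inactivePegs a) →
    rootPerm b = φ * rootPerm a * φ⁻¹ → b ∈ S

/-- The family `R̲_{k,n}`: the identity together with all Hanoi automorphisms
`a` such that (1) `Q_a ⊆ {m+1, …, m+n}` for some `m`, and (2) whenever
`i ∈ Q_a` the root permutation of `a` fixes `i-1, …, i-(n-1)`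
(all peg labels mod `k`). -/
noncomputable def Runder (k n : ℕ) : Set (Equiv.Perm (Word k)) :=
  {a | a = 1 ∨ (IsHanoiAut a ∧
    (∃ m : Fin k, ∀ q ∈ inactivePegs a, ∃ t : ℕ, 1 ≤ t ∧ t ≤ n ∧
      (q : ℕ) = ((m : ℕ) + t) % k) ∧
    ∀ i ∈ inactivePegs a, ∀ x : Fin k, ∀ t : ℕ, 1 ≤ t → t ≤ n - 1 →
      ((x : ℕ) + t) % k = (i : ℕ) → rootPerm a x = x)}

/-- The family `R̄_{k,n}`: the identity together with all Hanoi automorphisms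
`a` such that (1) `Q_a ⊆ {m+1, …, m+n}` for some `m`, and (2) whenever
`i ∈ Q_a` the root permutation of `a` fixes `i+1, …, i+(n-1)`
(all peg labels mod `k`). -/
noncomputable def Rover (k n : ℕ) : Set (Equiv.Perm (Word k)) :=
  {a | a = 1 ∨ (IsHanoiAut a ∧
    (∃ m : Fin k, ∀ q ∈ inactivePegs a, ∃ t : ℕ, 1 ≤ t ∧ t ≤ n ∧
      (q : ℕ) = ((m : ℕ) + t) % k) ∧
    ∀ i ∈ inactivePegs a, ∀ x : Fin k, ∀ t : ℕ, 1 ≤ t → t ≤ n - 1 →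
      (x : ℕ) = ((i : ℕ) + t) % k → rootPerm a x = x)}

/-- The finite word `x_m … x_1` (first letter `x_m`) read off from a
left-infinite sequence `… x_2 x_1`, encoded as `x : ℕ → Fin k` with
`x s = x_{s+1}`. -/
def wordOf {k : ℕ} (x : ℕ → Fin k) (m : ℕ) : Word k := (List.range m).reverse.map x

/-!
The section at a letter `x` of a product `s_m ⋯ s_1` of Hanoi automorphisms is the product of a
subword: a factor survives exactly when the letter it receives is one of its inactive pegs.
Hence, for a product whose factors have no common inactive peg, every first-level section is a
shorter product, and deep enough sections of any element are products of generators with a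
common inactive peg. Under condition (*) these form a finite set, by induction on the set `T`
of generators used: such a product is determined by its root permutation and its sections
outside the common inactive pegs, and each of those sections omits some generator of `T`
(at a letter fixed by all of `T`, one not having it as inactive peg; otherwise the one given
by (*)).

Generators from `R̄_{k,n}` with a common inactive peg `j₀` satisfy (*): each fixes pointwise the
interval from its lowest inactive peg below `j₀` up to `j₀ + n - 1`, which contains all its
inactive pegs. These intervals are nested, so the smallest one is fixed by all generators, and
the orbit of a letter outside it never meets the inactive pegs of the generator it belongs to.
-/

section TreeAut

variable {k : ℕ} {e a b : Equiv.Perm (Word k)}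

lemma IsTreeAut.apply_take (h : IsTreeAut e) (w : Word k) (n : ℕ) :
    e (w.take n) = (e w).take n :=
  calc e (w.take n) = (e (w.take n)).take n :=
        (List.take_of_length_le (by rw [h.1]; exact List.length_take_le n w)).symm
    _ = (e w).take n := h.2 _ _ n (by rw [List.take_take, min_self])

lemma isTreeAut_iff :
    IsTreeAut e ↔ (∀ w : Word k, (e w).length = w.length) ∧
      ∀ (w : Word k) (n : ℕ), e (w.take n) = (e w).take n := by
  refine ⟨fun h => ⟨h.1, h.apply_take⟩, fun h => ⟨h.1, fun w v n hwv => ?_⟩⟩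
  rw [← h.2, ← h.2, hwv]

lemma IsTreeAut.one : IsTreeAut (1 : Equiv.Perm (Word k)) :=
  ⟨fun _ => rfl, fun _ _ _ h => h⟩

lemma IsTreeAut.mul (ha : IsTreeAut a) (hb : IsTreeAut b) : IsTreeAut (a * b) :=
  isTreeAut_iff.2 ⟨fun w => by simp only [Equiv.Perm.mul_apply, ha.1, hb.1],
    fun w n => by simp only [Equiv.Perm.mul_apply, hb.apply_take, ha.apply_take]⟩

lemma IsTreeAut.inv (h : IsTreeAut e) : IsTreeAut e⁻¹ := by
  refine isTreeAut_iff.2 ⟨fun w => ?_, fun w n => ?_⟩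
  · rw [← h.1, Equiv.Perm.coe_inv, Equiv.apply_symm_apply]
  · rw [Equiv.Perm.inv_eq_iff_eq, h.apply_take, Equiv.Perm.coe_inv, Equiv.apply_symm_apply]

lemma IsTreeAut.list_prod {L : List (Equiv.Perm (Word k))} (h : ∀ s ∈ L, IsTreeAut s) :
    IsTreeAut L.prod := by
  induction L with
  | nil => exact IsTreeAut.one
  | cons s L ih =>
    rw [List.prod_cons]
    exact (h s List.mem_cons_self).mul (ih fun t ht => h t (List.mem_cons_of_mem s ht))

lemma IsTreeAut.apply_nil (h : IsTreeAut e) : e [] = [] :=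
  List.length_eq_zero_iff.mp (h.1 [])

private lemma IsTreeAut.apply_singleton_eq_head (h : IsTreeAut e) (x : Fin k) :
    e [x] = [(e [x]).head?.getD x] := by
  obtain ⟨y, hy⟩ := List.length_eq_one_iff.mp (h.1 [x])
  simp [hy]

private lemma IsTreeAut.apply_cons_eq_head (h : IsTreeAut e) (x : Fin k) (w : Word k) :
    e (x :: w) = (e [x]).head?.getD x :: (e (x :: w)).tail := by
  have hhead : (e (x :: w)).take 1 = [(e [x]).head?.getD x] := by
    rw [← h.apply_singleton_eq_head, ← h.apply_take]; rfl
  obtain ⟨y, t, hyt⟩ := List.exists_cons_of_length_eq_add_one (h.1 (x :: w))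
  rw [hyt] at hhead ⊢
  simp_all

lemma IsTreeAut.apply_singleton (h : IsTreeAut e) (x : Fin k) : e [x] = [rootPerm e x] := by
  have hinj : Function.Injective (fun x : Fin k => (e [x]).head?.getD x) := fun x y hxy => by
    have : e [x] = e [y] := by
      rw [h.apply_singleton_eq_head x, h.apply_singleton_eq_head y]
      exact congrArg (fun z => [z]) hxy
    simpa using e.injective this
  rw [rootPerm, dif_pos (Finite.injective_iff_bijective.mp hinj)]
  exact h.apply_singleton_eq_head x

lemma IsTreeAut.apply_cons (h : IsTreeAut e) (x : Fin k) (w : Word k) :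
    e (x :: w) = rootPerm e x :: sec e x w := by
  have hhead : ∀ y, (e [y]).head?.getD y = rootPerm e y := fun y => by
    rw [h.apply_singleton]; rfl
  have hbij : Function.Bijective (fun w : Word k => (e (x :: w)).tail) := by
    refine ⟨fun w v hwv => ?_, fun u => ?_⟩
    · have : e (x :: w) = e (x :: v) := by
        rw [h.apply_cons_eq_head x w, h.apply_cons_eq_head x v]; simp_all
      simpa using e.injective this
    · obtain ⟨y, z, hyz⟩ := List.exists_cons_of_length_eq_add_one
        ((h.1 _).symm.trans (congrArg List.length (e.apply_symm_apply (rootPerm e x :: u))))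
      have hez : e (y :: z) = rootPerm e x :: u := hyz ▸ e.apply_symm_apply _
      have hyx : rootPerm e y = rootPerm e x := by
        rw [h.apply_cons_eq_head, hhead y] at hez; exact (List.cons.inj hez).1
      obtain rfl := (rootPerm e).injective hyx
      exact ⟨z, by simp [hez]⟩
  rw [sec, dif_pos hbij, ← hhead x]
  exact h.apply_cons_eq_head x w

lemma rootPerm_mul_and_sec_mul (ha : IsTreeAut a) (hb : IsTreeAut b) (x : Fin k) :
    rootPerm (a * b) x = rootPerm a (rootPerm b x) ∧
      sec (a * b) x = sec a (rootPerm b x) * sec b x := by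
  have hsec : ∀ w, (a * b) (x :: w) =
      rootPerm a (rootPerm b x) :: (sec a (rootPerm b x) * sec b x) w := fun w => by
    rw [Equiv.Perm.mul_apply, hb.apply_cons, ha.apply_cons]; rfl
  refine ⟨?_, Equiv.ext fun w => ?_⟩
  · have := hsec []
    rw [(ha.mul hb).apply_cons] at this
    exact (List.cons.inj this).1
  · have := hsec w
    rw [(ha.mul hb).apply_cons] at this
    exact (List.cons.inj this).2

lemma rootPerm_mul (ha : IsTreeAut a) (hb : IsTreeAut b) :
    rootPerm (a * b) = rootPerm a * rootPerm b :=
  Equiv.ext fun x => (rootPerm_mul_and_sec_mul ha hb x).1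

lemma sec_mul (ha : IsTreeAut a) (hb : IsTreeAut b) (x : Fin k) :
    sec (a * b) x = sec a (rootPerm b x) * sec b x :=
  (rootPerm_mul_and_sec_mul ha hb x).2

lemma rootPerm_one : rootPerm (1 : Equiv.Perm (Word k)) = 1 :=
  Equiv.ext fun x => by simpa using (IsTreeAut.one.apply_singleton x).symm

lemma sec_one (x : Fin k) : sec (1 : Equiv.Perm (Word k)) x = 1 :=
  Equiv.ext fun w => (List.cons.inj (IsTreeAut.one.apply_cons x w).symm).2

lemma rootPerm_inv (h : IsTreeAut e) : rootPerm e⁻¹ = (rootPerm e)⁻¹ :=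
  eq_inv_of_mul_eq_one_left (by rw [← rootPerm_mul h.inv h, inv_mul_cancel, rootPerm_one])

lemma IsTreeAut.ext_of_sec (ha : IsTreeAut a) (hb : IsTreeAut b) (E : Set (Fin k))
    (hσ : rootPerm a = rootPerm b) (hE : ∀ x ∈ E, sec a x = a ∧ sec b x = b)
    (hnE : ∀ x ∉ E, sec a x = sec b x) : a = b := by
  refine Equiv.ext fun w => ?_
  induction w with
  | nil => rw [ha.apply_nil, hb.apply_nil]
  | cons x w ih =>
    rw [ha.apply_cons, hb.apply_cons, hσ]
    by_cases hx : x ∈ E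
    · rw [(hE x hx).1, (hE x hx).2, ih]
    · rw [hnE x hx]

end TreeAut

section HanoiAut

variable {k : ℕ} {a b : Equiv.Perm (Word k)} {Q : Set (Fin k)} {x : Fin k}

lemma IsHanoiWith.one : IsHanoiWith (1 : Equiv.Perm (Word k)) Set.univ :=
  ⟨IsTreeAut.one, fun i hi => absurd (Set.mem_univ i) hi, fun j _ => sec_one j,
    fun j _ => by rw [rootPerm_one]; rfl⟩

lemma inactivePegs_one : inactivePegs (1 : Equiv.Perm (Word k)) = Set.univ :=
  if_pos rfl

lemma IsHanoiAut.one : IsHanoiAut (1 : Equiv.Perm (Word k)) := ⟨_, IsHanoiWith.one⟩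

lemma IsHanoiAut.isHanoiWith (h : IsHanoiAut a) : IsHanoiWith a (inactivePegs a) := by
  by_cases h1 : a = 1
  · subst h1; rw [inactivePegs_one]; exact IsHanoiWith.one
  · rw [inactivePegs, if_neg h1, dif_pos (show ∃ Q, IsHanoiWith a Q from h)]
    exact h.choose_spec

lemma IsHanoiAut.isTreeAut (h : IsHanoiAut a) : IsTreeAut a := h.isHanoiWith.1

lemma IsHanoiAut.sec_of_notMem (h : IsHanoiAut a) (hx : x ∉ inactivePegs a) : sec a x = 1 :=
  h.isHanoiWith.2.1 x hx

lemma IsHanoiAut.sec_of_mem (h : IsHanoiAut a) (hx : x ∈ inactivePegs a) : sec a x = a :=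
  h.isHanoiWith.2.2.1 x hx

lemma IsHanoiAut.rootPerm_of_mem (h : IsHanoiAut a) (hx : x ∈ inactivePegs a) :
    rootPerm a x = x :=
  h.isHanoiWith.2.2.2 x hx

lemma IsHanoiWith.inactivePegs_eq (hw : IsHanoiWith a Q) (h1 : a ≠ 1) : inactivePegs a = Q := by
  have h := IsHanoiAut.isHanoiWith ⟨Q, hw⟩
  ext x
  constructor
  · intro hx
    by_contra hxQ
    exact h1 (by rw [← h.2.2.1 x hx, hw.2.1 x hxQ])
  · intro hx
    by_contra hxQ
    exact h1 (by rw [← hw.2.2.1 x hx, h.2.1 x hxQ])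

lemma IsHanoiWith.inv (hw : IsHanoiWith a Q) : IsHanoiWith a⁻¹ Q := by
  obtain ⟨ha, hact, hinact, hfix⟩ := hw
  have hsec : ∀ y, sec a⁻¹ (rootPerm a y) * sec a y = 1 := fun y => by
    rw [← sec_mul ha.inv ha, inv_mul_cancel, sec_one]
  have hσ : ∀ y, rootPerm a ((rootPerm a)⁻¹ y) = y := (rootPerm a).apply_symm_apply
  refine ⟨ha.inv, fun i hi => ?_, fun j hj => ?_, fun j hj => ?_⟩
  · have hi' : (rootPerm a)⁻¹ i ∉ Q := fun hQ => hi (by rwa [← hσ i, hfix _ hQ])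
    simpa only [hσ, hact _ hi', mul_one] using hsec ((rootPerm a)⁻¹ i)
  · simpa [hfix j hj, hinact j hj, mul_eq_one_iff_eq_inv] using hsec j
  · rw [rootPerm_inv ha, Equiv.Perm.inv_eq_iff_eq, hfix j hj]

lemma IsHanoiAut.inv (h : IsHanoiAut a) : IsHanoiAut a⁻¹ :=
  ⟨_, h.isHanoiWith.inv⟩

lemma IsHanoiAut.inactivePegs_inv (h : IsHanoiAut a) : inactivePegs a⁻¹ = inactivePegs a := by
  by_cases h1 : a = 1
  · rw [h1, inv_one]
  · exact h.isHanoiWith.inv.inactivePegs_eq (inv_ne_one.mpr h1)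

lemma IsHanoiWith.eq_of_rootPerm_eq (ha : IsHanoiWith a Q) (hb : IsHanoiWith b Q)
    (hσ : rootPerm a = rootPerm b) : a = b :=
  ha.1.ext_of_sec hb.1 Q hσ (fun x hx => ⟨ha.2.2.1 x hx, hb.2.2.1 x hx⟩)
    (fun x hx => by rw [ha.2.1 x hx, hb.2.1 x hx])

lemma finite_setOf_isHanoiAut : {a : Equiv.Perm (Word k) | IsHanoiAut a}.Finite := by
  refine Set.Finite.of_finite_image (f := fun a => (rootPerm a, inactivePegs a))
    (Set.toFinite _) fun a ha b hb hab => ?_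
  obtain ⟨hσ, hQ⟩ := Prod.mk.inj hab
  exact ha.isHanoiWith.eq_of_rootPerm_eq (hQ ▸ hb.isHanoiWith) hσ

end HanoiAut

section ListProd

variable {k : ℕ} {L : List (Equiv.Perm (Word k))} {x : Fin k}

lemma mem_essSet : x ∈ essSet L ↔ ∀ s ∈ L, x ∈ inactivePegs s := by
  simp only [essSet, Set.mem_iInter₂]

lemma essSet_subset_of_sublist {M : List (Equiv.Perm (Word k))} (h : M.Sublist L) :
    essSet L ⊆ essSet M := fun _ hx =>
  mem_essSet.2 fun s hs => mem_essSet.1 hx s (h.subset hs)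

lemma rootPerm_list_prod_mapsTo {O : Set (Fin k)} (hL : ∀ s ∈ L, IsTreeAut s)
    (hO : ∀ s ∈ L, Set.MapsTo (rootPerm s) O O) : Set.MapsTo (rootPerm L.prod) O O := by
  induction L with
  | nil => rw [List.prod_nil, rootPerm_one]; exact Set.mapsTo_id O
  | cons s L ih =>
    rw [List.prod_cons, rootPerm_mul (hL s List.mem_cons_self)
      (IsTreeAut.list_prod fun t ht => hL t (List.mem_cons_of_mem s ht))]
    exact (hO s List.mem_cons_self).comp (ih (fun t ht => hL t (List.mem_cons_of_mem s ht))
      fun t ht => hO t (List.mem_cons_of_mem s ht))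

variable (hL : ∀ s ∈ L, IsHanoiAut s)
include hL

lemma isTreeAut_list_prod : IsTreeAut L.prod :=
  IsTreeAut.list_prod fun s hs => (hL s hs).isTreeAut

lemma exists_sublist_sec_list_prod {O : Set (Fin k)}
    (hO : ∀ s ∈ L, Set.MapsTo (rootPerm s) O O) (hx : x ∈ O) :
    ∃ M : List (Equiv.Perm (Word k)), M.Sublist L ∧ sec L.prod x = M.prod ∧
      ∀ s ∈ M, (O ∩ inactivePegs s).Nonempty := by
  induction L with
  | nil => exact ⟨[], List.Sublist.slnil, by rw [List.prod_nil, sec_one], by simp⟩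
  | cons s L ih =>
    have hLt : ∀ t ∈ L, IsHanoiAut t := fun t ht => hL t (List.mem_cons_of_mem s ht)
    obtain ⟨M, hML, hsec, hMO⟩ := ih hLt fun t ht => hO t (List.mem_cons_of_mem s ht)
    have hs := hL s List.mem_cons_self
    have hy : rootPerm L.prod x ∈ O := rootPerm_list_prod_mapsTo
      (fun t ht => (hLt t ht).isTreeAut) (fun t ht => hO t (List.mem_cons_of_mem s ht)) hx
    rw [List.prod_cons, sec_mul hs.isTreeAut (isTreeAut_list_prod hLt), hsec]
    by_cases hyQ : rootPerm L.prod x ∈ inactivePegs s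
    · refine ⟨s :: M, hML.cons_cons s, by rw [hs.sec_of_mem hyQ, List.prod_cons], ?_⟩
      rintro t (_ | ⟨_, ht⟩)
      exacts [⟨_, hy, hyQ⟩, hMO t ht]
    · exact ⟨M, hML.cons s, by rw [hs.sec_of_notMem hyQ, one_mul], hMO⟩

lemma rootPerm_list_prod_of_mem_essSet (hx : x ∈ essSet L) : rootPerm L.prod x = x :=
  rootPerm_list_prod_mapsTo (O := {x}) (fun s hs => (hL s hs).isTreeAut)
    (fun s hs => Set.mapsTo_singleton.2 ((hL s hs).rootPerm_of_mem (mem_essSet.1 hx s hs))) rfl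

lemma sec_list_prod_of_mem_essSet (hx : x ∈ essSet L) : sec L.prod x = L.prod := by
  induction L with
  | nil => rw [List.prod_nil, sec_one]
  | cons s L ih =>
    have hLt : ∀ t ∈ L, IsHanoiAut t := fun t ht => hL t (List.mem_cons_of_mem s ht)
    have hxL : x ∈ essSet L := essSet_subset_of_sublist (List.sublist_cons_self s L) hx
    rw [List.prod_cons, sec_mul (hL s List.mem_cons_self).isTreeAut
      (isTreeAut_list_prod hLt), rootPerm_list_prod_of_mem_essSet hLt hxL, ih hLt hxL,
      (hL s List.mem_cons_self).sec_of_mem (mem_essSet.1 hx s List.mem_cons_self)]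

/-- The first factor from the right not having `x` as inactive peg receives `x` itself. -/
lemma exists_sublist_sec_list_prod_length_lt (hx : x ∉ essSet L) :
    ∃ M : List (Equiv.Perm (Word k)),
      M.Sublist L ∧ sec L.prod x = M.prod ∧ M.length < L.length := by
  induction L with
  | nil => exact absurd (mem_essSet.2 (by simp)) hx
  | cons s L ih =>
    have hLt : ∀ t ∈ L, IsHanoiAut t := fun t ht => hL t (List.mem_cons_of_mem s ht)
    have hs := hL s List.mem_cons_self
    rw [List.prod_cons, sec_mul hs.isTreeAut (isTreeAut_list_prod hLt)]
    by_cases hxL : x ∈ essSet L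
    · have hxs : x ∉ inactivePegs s := fun hxs =>
        hx (mem_essSet.2 fun t ht => (List.mem_cons.1 ht).elim (· ▸ hxs) (mem_essSet.1 hxL t))
      rw [rootPerm_list_prod_of_mem_essSet hLt hxL, hs.sec_of_notMem hxs, one_mul,
        sec_list_prod_of_mem_essSet hLt hxL]
      exact ⟨L, List.sublist_cons_self s L, rfl, Nat.lt_succ_self _⟩
    · obtain ⟨M, hML, hsec, hlen⟩ := ih hLt hxL
      rw [hsec]
      by_cases hyQ : rootPerm L.prod x ∈ inactivePegs s
      · exact ⟨s :: M, hML.cons_cons s, by rw [hs.sec_of_mem hyQ, List.prod_cons],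
          Nat.succ_lt_succ hlen⟩
      · exact ⟨M, hML.cons s, by rw [hs.sec_of_notMem hyQ, one_mul], Nat.lt_succ_of_lt hlen⟩

lemma exists_sublist_secW_list_prod (v : Word k) :
    ∃ M : List (Equiv.Perm (Word k)), M.Sublist L ∧ secW L.prod v = M.prod := by
  induction v generalizing L with
  | nil => exact ⟨L, List.Sublist.refl L, rfl⟩
  | cons x v ih =>
    obtain ⟨M₁, h₁, hsec, -⟩ :=
      exists_sublist_sec_list_prod hL (fun _ _ => Set.mapsTo_univ _ _) (Set.mem_univ x)
    obtain ⟨M₂, h₂, hsecW⟩ := ih fun s hs => hL s (h₁.subset hs)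
    exact ⟨M₂, h₂.trans h₁, by rw [secW, hsec, hsecW]⟩

end ListProd

section CondStar

variable {k : ℕ}

lemma exists_secW_mem_of_forall_sec {e : Equiv.Perm (Word k)} {N : Set (Equiv.Perm (Word k))}
    (h : ∀ x, ∃ m, ∀ v : Word k, m ≤ v.length → secW (sec e x) v ∈ N) :
    ∃ m, ∀ v : Word k, m ≤ v.length → secW e v ∈ N := by
  choose m hm using h
  refine ⟨Finset.univ.sup m + 1, fun v hv => ?_⟩
  cases v with
  | nil => simp at hv
  | cons x v =>
    have := Finset.le_sup (f := m) (Finset.mem_univ x)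
    exact hm x v (by simp only [List.length_cons] at hv; omega)

lemma finite_of_sec_mem {A B : Set (Equiv.Perm (Word k))} (E : Set (Fin k)) (hB : B.Finite)
    (hA : ∀ g ∈ A, IsTreeAut g) (hE : ∀ g ∈ A, ∀ x ∈ E, sec g x = g)
    (hnE : ∀ g ∈ A, ∀ x ∉ E, sec g x ∈ B) : A.Finite := by
  classical
  let Φ : Equiv.Perm (Word k) → Equiv.Perm (Fin k) × (Fin k → Equiv.Perm (Word k)) :=
    fun g => (rootPerm g, fun x => if x ∈ E then 1 else sec g x)
  have hinj : Set.InjOn Φ A := fun g hg h hh hgh => by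
    obtain ⟨hσ, hsec⟩ := Prod.mk.inj hgh
    refine (hA g hg).ext_of_sec (hA h hh) E hσ (fun x hx => ⟨hE g hg x hx, hE h hh x hx⟩)
      fun x hx => ?_
    simpa [hx] using congrFun hsec x
  refine Set.Finite.of_finite_image ((Set.finite_univ.prod
    (Set.Finite.pi fun _ => (hB.insert 1))).subset ?_) hinj
  rintro _ ⟨g, hg, rfl⟩
  refine ⟨Set.mem_univ _, Set.mem_univ_pi.2 fun x => ?_⟩
  by_cases hx : x ∈ E
  · simp [Φ, hx]
  · simpa [Φ, hx] using Or.inr (hnE g hg x hx)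

lemma rootPerm_mapsTo_orbT {T : Finset (Equiv.Perm (Word k))} {s : Equiv.Perm (Word k)}
    (hs : s ∈ T) (j : Fin k) : Set.MapsTo (rootPerm s) (orbT T j) (orbT T j) := fun _ hy =>
  MulAction.mem_orbit_of_mem_orbit
    (⟨rootPerm s, Subgroup.subset_closure ⟨s, hs, rfl⟩⟩ :
      Subgroup.closure ((fun a => rootPerm a) '' (T : Set (Equiv.Perm (Word k))))) hy

lemma mem_of_mem_orbT {T : Finset (Equiv.Perm (Word k))} {I : Set (Fin k)}
    (hfix : ∀ s ∈ T, ∀ x ∈ I, rootPerm s x = x) {j y : Fin k} (hy : y ∈ orbT T j)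
    (hyI : y ∈ I) : j ∈ I := by
  have hle : Subgroup.closure ((fun a => rootPerm a) '' (T : Set (Equiv.Perm (Word k)))) ≤
      fixingSubgroup (Equiv.Perm (Fin k)) I := by
    rw [Subgroup.closure_le]
    rintro _ ⟨s, hs, rfl⟩
    exact (mem_fixingSubgroup_iff _).2 (hfix s hs)
  obtain ⟨g, rfl⟩ := hy
  have hg := (mem_fixingSubgroup_iff _).1 (inv_mem (hle g.2)) _ hyI
  simp only [Subgroup.smul_def, inv_smul_smul] at hg hyI
  rwa [hg]

variable {S : Set (Equiv.Perm (Word k))}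

lemma finite_submonoidClosure_of_condStar (hS : ∀ s ∈ S, IsHanoiAut s) (hC : CondStar S)
    (T : Finset (Equiv.Perm (Word k))) (hTS : (T : Set (Equiv.Perm (Word k))) ⊆ S)
    (hT : (⋂ s ∈ T, inactivePegs s).Nonempty) :
    (Submonoid.closure (T : Set (Equiv.Perm (Word k))) : Set (Equiv.Perm (Word k))).Finite := by
  classical
  induction T using Finset.strongInduction with
  | H T ih =>
    have hB : (⋃ t ∈ T, (Submonoid.closure (T.erase t : Set (Equiv.Perm (Word k))) :
        Set (Equiv.Perm (Word k)))).Finite :=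
      Set.Finite.biUnion T.finite_toSet fun t ht => ih _ (Finset.erase_ssubset ht)
        ((Finset.coe_subset.2 (Finset.erase_subset t T)).trans hTS)
        (hT.mono (Set.biInter_subset_biInter_left fun s hs => Finset.mem_of_mem_erase hs))
    have hprod : ∀ g ∈ Submonoid.closure (T : Set (Equiv.Perm (Word k))),
        ∃ L : List (Equiv.Perm (Word k)),
          (∀ s ∈ L, s ∈ T) ∧ (∀ s ∈ L, IsHanoiAut s) ∧ L.prod = g :=
      fun g hg => by
        obtain ⟨L, hLT, rfl⟩ := Submonoid.exists_list_of_mem_closure hg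
        exact ⟨L, hLT, fun s hs => hS s (hTS (hLT s hs)), rfl⟩
    refine finite_of_sec_mem (⋂ s ∈ T, inactivePegs s) hB ?_ ?_ ?_
    · intro g hg
      obtain ⟨L, -, hL, rfl⟩ := hprod g hg
      exact isTreeAut_list_prod hL
    · intro g hg x hx
      obtain ⟨L, hLT, hL, rfl⟩ := hprod g hg
      exact sec_list_prod_of_mem_essSet hL
        (mem_essSet.2 fun s hs => Set.mem_iInter₂.1 hx s (hLT s hs))
    · intro g hg x hx
      obtain ⟨L, hLT, hL, rfl⟩ := hprod g hg
      obtain ⟨O, hxO, hOT, t, ht, hOt⟩ : ∃ O : Set (Fin k), x ∈ O ∧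
          (∀ s ∈ T, Set.MapsTo (rootPerm s) O O) ∧
          ∃ t ∈ T, O ∩ inactivePegs t = ∅ := by
        by_cases hfix : x ∈ fixT T
        · obtain ⟨t, ht, hxt⟩ : ∃ t ∈ T, x ∉ inactivePegs t := by
            simpa only [Set.mem_iInter₂, not_forall, exists_prop] using hx
          exact ⟨{x}, rfl, fun s hs => Set.mapsTo_singleton.2 (hfix s hs), t, ht,
            Set.singleton_inter_eq_empty.2 hxt⟩
        · exact ⟨orbT T x, MulAction.mem_orbit_self x, fun s hs => rootPerm_mapsTo_orbT hs x,
            hC T hTS hT x hfix⟩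
      obtain ⟨M, hML, hsec, hMO⟩ :=
        exists_sublist_sec_list_prod hL (fun s hs => hOT s (hLT s hs)) hxO
      refine Set.mem_biUnion ht (hsec ▸ Submonoid.list_prod_mem _ fun s hs =>
        Submonoid.subset_closure (Finset.mem_erase.2 ⟨?_, hLT s (hML.subset hs)⟩))
      rintro rfl
      exact (hMO s hs).ne_empty hOt

end CondStar

section EssentialProducts

variable {k : ℕ} {S : Set (Equiv.Perm (Word k))}

def essProds (S : Set (Equiv.Perm (Word k))) : Set (Equiv.Perm (Word k)) :=
  {g | ∃ L : List (Equiv.Perm (Word k)),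
    (∀ s ∈ L, s ∈ S) ∧ (essSet L).Nonempty ∧ L.prod = g}

lemma essProds_subset_closure : essProds S ⊆ Subgroup.closure S := by
  rintro _ ⟨L, hLS, -, rfl⟩
  exact list_prod_mem fun s hs => Subgroup.subset_closure (hLS s hs)

lemma essProds_finite (hS : ∀ s ∈ S, IsHanoiAut s) (hC : CondStar S) : (essProds S).Finite := by
  let Sj (j : Fin k) : Set (Equiv.Perm (Word k)) := {s | s ∈ S ∧ j ∈ inactivePegs s}
  have hSj (j : Fin k) : (Sj j).Finite := finite_setOf_isHanoiAut.subset fun s hs => hS s hs.1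
  refine (Set.finite_iUnion fun j => finite_submonoidClosure_of_condStar hS hC (hSj j).toFinset
    (by rw [Set.Finite.coe_toFinset]; exact fun s hs => hs.1) ⟨j, by simp [Sj]⟩).subset ?_
  rintro _ ⟨L, hLS, ⟨j, hj⟩, rfl⟩
  exact Set.mem_iUnion.2 ⟨j, Submonoid.list_prod_mem _ fun s hs =>
    Submonoid.subset_closure (by simpa [Sj] using ⟨hLS s hs, mem_essSet.1 hj s hs⟩)⟩

lemma secW_mem_essProds (hS : ∀ s ∈ S, IsHanoiAut s) {g : Equiv.Perm (Word k)}
    (hg : g ∈ essProds S) (v : Word k) : secW g v ∈ essProds S := by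
  obtain ⟨L, hLS, hL, rfl⟩ := hg
  obtain ⟨M, hML, hsecW⟩ := exists_sublist_secW_list_prod (fun s hs => hS s (hLS s hs)) v
  exact ⟨M, fun s hs => hLS s (hML.subset hs), hL.mono (essSet_subset_of_sublist hML),
    hsecW.symm⟩

lemma exists_secW_list_prod_mem_essProds (hS : ∀ s ∈ S, IsHanoiAut s)
    (L : List (Equiv.Perm (Word k))) (hLS : ∀ s ∈ L, s ∈ S) :
    ∃ m, ∀ v : Word k, m ≤ v.length → secW L.prod v ∈ essProds S := by
  have hL : ∀ s ∈ L, IsHanoiAut s := fun s hs => hS s (hLS s hs)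
  by_cases hE : (essSet L).Nonempty
  · exact ⟨0, fun v _ => secW_mem_essProds hS ⟨L, hLS, hE, rfl⟩ v⟩
  · refine exists_secW_mem_of_forall_sec fun x => ?_
    obtain ⟨M, hML, hsec, hlen⟩ :=
      exists_sublist_sec_list_prod_length_lt hL fun hx => hE ⟨x, hx⟩
    rw [hsec]
    exact exists_secW_list_prod_mem_essProds hS M fun s hs => hLS s (hML.subset hs)
termination_by L.length

theorem isContracting_closure_of_condStar (hS : ∀ s ∈ S, IsHanoiAut s)
    (hinv : S⁻¹ ⊆ S) (hC : CondStar S) : IsContracting (Subgroup.closure S) := by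
  refine ⟨essProds S, essProds_finite hS hC, essProds_subset_closure, fun g hg => ?_⟩
  rw [← Subgroup.mem_toSubmonoid, Subgroup.closure_toSubmonoid, Set.union_eq_left.2 hinv] at hg
  obtain ⟨L, hLS, rfl⟩ := Submonoid.exists_list_of_mem_closure hg
  exact exists_secW_list_prod_mem_essProds hS L hLS

end EssentialProducts

section Rover

variable {k n : ℕ} {a : Equiv.Perm (Word k)}

lemma IsHanoiAut.of_mem_Rover (ha : a ∈ Rover k n) : IsHanoiAut a :=
  ha.elim (fun h => h ▸ IsHanoiAut.one) (·.1)

lemma inv_mem_Rover (ha : a ∈ Rover k n) : a⁻¹ ∈ Rover k n := by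
  rcases ha with rfl | ⟨hH, hwin, hfix⟩
  · exact Or.inl inv_one
  · refine Or.inr ⟨hH.inv, hH.inactivePegs_inv ▸ hwin, fun i hi x t ht1 ht2 hx => ?_⟩
    rw [hH.inactivePegs_inv] at hi
    rw [rootPerm_inv hH.isTreeAut, Equiv.Perm.inv_eq_iff_eq, hfix i hi x t ht1 ht2 hx]

variable [NeZero k]

open Fin.NatCast Fin.CommRing

lemma val_eq_add_mod_iff {x i : Fin k} {t : ℕ} :
    (x : ℕ) = ((i : ℕ) + t) % k ↔ x = i + t := by
  rw [Fin.ext_iff, Fin.val_add, Fin.val_natCast, Nat.add_mod_mod]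

lemma Rover.rootPerm_add_eq (ha : a ∈ Rover k n) {q : Fin k} (hq : q ∈ inactivePegs a) {s : ℕ}
    (hs : s ≤ n - 1) : rootPerm a (q + s) = q + s := by
  rcases ha with rfl | ⟨hH, -, hfix⟩
  · rw [rootPerm_one]; rfl
  · rcases Nat.eq_zero_or_pos s with rfl | hs0
    · simpa using hH.rootPerm_of_mem hq
    · exact hfix q hq _ s hs0 hs (val_eq_add_mod_iff.2 rfl)

noncomputable def reach (n : ℕ) (j : Fin k) (a : Equiv.Perm (Word k)) : ℕ :=
  open Classical in Nat.findGreatest (fun u => j - (u : Fin k) ∈ inactivePegs a) (n - 1)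

lemma reach_le (j : Fin k) (a : Equiv.Perm (Word k)) : reach n j a ≤ n - 1 := by
  classical
  exact Nat.findGreatest_le _

lemma sub_reach_mem {j : Fin k} (hj : j ∈ inactivePegs a) :
    j - (reach n j a : Fin k) ∈ inactivePegs a := by
  classical
  exact Nat.findGreatest_spec (P := fun u => j - (u : Fin k) ∈ inactivePegs a) (Nat.zero_le _)
    (by simpa using hj)

lemma le_reach {j : Fin k} {u : ℕ} (hu : u ≤ n - 1) (h : j - (u : Fin k) ∈ inactivePegs a) :
    u ≤ reach n j a := by
  classical
  exact Nat.le_findGreatest hu h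

def pegInterval (n : ℕ) (j : Fin k) (b : ℕ) : Set (Fin k) :=
  (fun r : ℤ => j + r) '' Set.Icc (-(b : ℤ)) (n - 1)

lemma pegInterval_mono {j : Fin k} {b b' : ℕ} (h : b ≤ b') :
    pegInterval n j b ⊆ pegInterval n j b' :=
  Set.image_mono (Set.Icc_subset_Icc (by omega) le_rfl)

lemma Rover.rootPerm_eq_of_mem_pegInterval (ha : a ∈ Rover k n) {j : Fin k}
    (hj : j ∈ inactivePegs a) {x : Fin k} (hx : x ∈ pegInterval n j (reach n j a)) :
    rootPerm a x = x := by
  obtain ⟨r, ⟨hr₁, hr₂⟩, rfl⟩ := hx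
  have hb := reach_le (n := n) j a
  rcases le_or_gt 0 r with hr | hr
  · lift r to ℕ using hr
    simpa using Rover.rootPerm_add_eq ha hj (s := r) (by omega)
  · obtain ⟨s, hs⟩ := Int.eq_ofNat_of_zero_le (by omega : 0 ≤ r + reach n j a)
    have hx : j + (r : Fin k) = j - (reach n j a : Fin k) + s := by
      rw [show r = s - reach n j a by omega]; push_cast; ring
    simp only [hx]
    exact Rover.rootPerm_add_eq ha (sub_reach_mem hj) (by omega)

lemma Rover.inactivePegs_subset_pegInterval (ha : a ∈ Rover k n) (ha1 : a ≠ 1) {j : Fin k}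
    (hj : j ∈ inactivePegs a) : inactivePegs a ⊆ pegInterval n j (reach n j a) := by
  obtain ⟨-, ⟨m, hm⟩, -⟩ := ha.resolve_left ha1
  intro q hqa
  obtain ⟨tq, hq₁, hq₂, hq⟩ := hm q hqa
  obtain ⟨tj, hj₁, hj₂, hjm⟩ := hm j hj
  rw [val_eq_add_mod_iff] at hq hjm
  refine ⟨(tq : ℤ) - tj, ⟨?_, by omega⟩, by rw [hq, hjm]; push_cast; ring⟩
  rcases le_or_gt tj tq with h | h
  · omega
  · have hu : tj - tq ≤ reach n j a := le_reach (by omega) (by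
      rwa [show j - ((tj - tq : ℕ) : Fin k) = q by rw [hq, hjm, Nat.cast_sub h.le]; ring])
    omega

end Rover

theorem condStar_of_subset_Rover {k n : ℕ} {S : Set (Equiv.Perm (Word k))}
    (hS : S ⊆ Rover k n) : CondStar S := by
  classical
  intro T hTS ⟨j₀, hj₀⟩ j hj
  have : NeZero k := NeZero.of_pos j.pos
  have hj₀T : ∀ t ∈ T, j₀ ∈ inactivePegs t := Set.mem_iInter₂.1 hj₀
  obtain ⟨t, ht, hjt⟩ : ∃ t ∈ T, rootPerm t j ≠ j := by simpa [fixT] using hj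
  have ht1 : t ≠ 1 := by rintro rfl; exact hjt (by rw [rootPerm_one]; rfl)
  obtain ⟨s, hs, hmin⟩ := Finset.exists_min_image (T.filter (· ≠ 1)) (reach n j₀)
    ⟨t, Finset.mem_filter.2 ⟨ht, ht1⟩⟩
  obtain ⟨hsT, hs1⟩ := Finset.mem_filter.1 hs
  have hfix : ∀ u ∈ T, ∀ x ∈ pegInterval n j₀ (reach n j₀ s), rootPerm u x = x := by
    intro u hu x hx
    by_cases hu1 : u = 1
    · rw [hu1, rootPerm_one]; rfl
    · exact Rover.rootPerm_eq_of_mem_pegInterval (hS (hTS hu)) (hj₀T u hu)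
        (pegInterval_mono (hmin u (Finset.mem_filter.2 ⟨hu, hu1⟩)) hx)
  refine ⟨s, hsT, Set.eq_empty_of_forall_notMem fun y ⟨hy, hyQ⟩ => hj fun u hu => ?_⟩
  exact hfix u hu j (mem_of_mem_orbT hfix hy
    (Rover.inactivePegs_subset_pegInterval (hS (hTS hsT)) hs1 (hj₀T s hsT) hyQ))

theorem Rover_contracting_general {k n : ℕ}
    (S : Set (Equiv.Perm (Word k)))
    (hS : S ⊆ Rover k n) :
    IsContracting (Subgroup.closure S) := by
  have hS' : S ∪ S⁻¹ ⊆ Rover k n :=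
    Set.union_subset hS fun a ha => inv_inv a ▸ inv_mem_Rover (hS ha)
  have hcl : Subgroup.closure (S ∪ S⁻¹) = Subgroup.closure S := by
    rw [Subgroup.closure_union, Subgroup.closure_inv, sup_idem]
  rw [← hcl]
  exact isContracting_closure_of_condStar (fun a ha => IsHanoiAut.of_mem_Rover (hS' ha))
    (by rw [Set.union_inv, inv_inv, Set.union_comm]) (condStar_of_subset_Rover hS')

/-- Proposition: Hanoi groups generated by subsets of
`R̄_{k,n}` are contracting. -/
theorem Rover_contracting {k n : ℕ} (hn : 1 ≤ n) (hk : 2 * n + 1 ≤ k)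
    (S : Set (Equiv.Perm (Word k))) (hS1 : (1 : Equiv.Perm (Word k)) ∈ S)
    (hS : S ⊆ Rover k n) :
    IsContracting (Subgroup.closure S) :=
  Rover_contracting_general S hS

end Hanoi
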